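/- (Theorem 2.3, second identity, q-case; q-factorial moments of the q-binomial distribution of the second kind, giving the conditional moments of X₂ given X₁ = x₁ upon taking N = n − x₁ and β = β₂.) Let N ∈ ℕ, β ∈ (0,1) and let m be a natural number with m ≤ N. Then ∑_{x=0}^{N} [x]_{m,q} · C_q(N,x) · β^{x} · ⟨1⊖β⟩_{N−x} = [N]_{m,q} · β^{m}. -/

import Mathlib

open Finset

/-- q-integer `[k]_q = (1 - q^k)/(1 - q)`. -/
noncomputable def qInt (q : ℝ) (k : ℤ) : ℝ := (1 - q ^ k) / (1 - q)

/-- q-factorial `[n]_q! = ∏_{i=1}^n [i]_q`. -/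
noncomputable def qFact (q : ℝ) (n : ℕ) : ℝ := ∏ i ∈ Finset.Icc 1 n, qInt q (i : ℤ)

/-- q-binomial coefficient `C_q(n,k)`. -/
noncomputable def qBinom (q : ℝ) (n k : ℕ) : ℝ := qFact q n / (qFact q k * qFact q (n - k))

/-- q-falling factorial `[u]_{m,q} = ∏_{i=1}^m [u-i+1]_q`. -/
noncomputable def qFall (q : ℝ) (u : ℤ) (m : ℕ) : ℝ := ∏ i ∈ Finset.Icc 1 m, qInt q (u - (i : ℤ) + 1)

/-- `[k]_{q⁻¹} = q^{1-k} · [k]_q`. -/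
noncomputable def qIntInv (q : ℝ) (k : ℤ) : ℝ := q ^ (1 - k) * qInt q k

/-- `[u]_{m,q⁻¹} = ∏_{i=1}^m [u-i+1]_{q⁻¹}`. -/
noncomputable def qFallInv (q : ℝ) (u : ℤ) (m : ℕ) : ℝ := ∏ i ∈ Finset.Icc 1 m, qIntInv q (u - (i : ℤ) + 1)

/-- `b(k) = k(k-1)/2`. -/
def bb (k : ℕ) : ℕ := k * (k - 1) / 2

/-- `⟨1 ⊕ α⟩_m = ∏_{i=1}^m (1 + α q^{i-1})`. -/
noncomputable def oplus (q α : ℝ) (m : ℕ) : ℝ := ∏ i ∈ Finset.Icc 1 m, (1 + α * q ^ (i - 1))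

/-- `⟨1 ⊖ β⟩_m = ∏_{i=1}^m (1 - β q^{i-1})`. -/
noncomputable def ominus (q β : ℝ) (m : ℕ) : ℝ := ∏ i ∈ Finset.Icc 1 m, (1 - β * q ^ (i - 1))

/-- q-trinomial coefficient `T_q(n; x₁, x₂)`. -/
noncomputable def qTri (q : ℝ) (n x1 x2 : ℕ) : ℝ :=
  qFact q n / (qFact q x1 * qFact q x2 * qFact q (n - x1 - x2))

/-!
Absorption, `[x]_{m,q} C_q(m+n, x) = [m+n]_{m,q} C_q(n, x-m)` for `x ≥ m` (and `[x]_{m,q} = 0` for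
`x < m`), pulls `[N]_{m,q} β^m` out of the sum and leaves the total mass of the q-binomial
distribution of the second kind, `∑ C_q(n,x) t^x ⟨1⊖t⟩_{n-x} = 1`. That holds for every `t`, by
induction on `n`: writing `⟨1⊖t⟩_{n+1-x} = ⟨1⊖t⟩_{n-x} (1 - t q^{n-x})`, each term of the `n`-th sum
splits into two pieces, and q-Pascal regroups exactly these pieces into the terms of the `(n+1)`-st.
-/

section

variable {q : ℝ}

theorem qInt_natCast_add (a b : ℕ) :
    qInt q ((a + b : ℕ) : ℤ) = qInt q a + q ^ a * qInt q b := by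
  simp only [qInt, zpow_natCast, pow_add]
  ring

theorem qInt_natCast_pos (hq0 : 0 < q) (hq1 : q < 1) {k : ℕ} (hk : 1 ≤ k) :
    0 < qInt q k := by
  rw [qInt, zpow_natCast]
  have : q ^ k < 1 := pow_lt_one₀ hq0.le hq1 (by omega)
  exact div_pos (by linarith) (by linarith)

theorem qFact_pos (hq0 : 0 < q) (hq1 : q < 1) (n : ℕ) : 0 < qFact q n :=
  prod_pos fun _ hi => qInt_natCast_pos hq0 hq1 (mem_Icc.mp hi).1

@[simp]
theorem qFact_zero : qFact q 0 = 1 := rfl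

theorem qFact_succ (n : ℕ) : qFact q (n + 1) = qFact q n * qInt q ((n + 1 : ℕ) : ℤ) := by
  rw [qFact, prod_Icc_succ_top (by omega)]
  rfl

@[simp]
theorem ominus_zero (t : ℝ) : ominus q t 0 = 1 := rfl

theorem ominus_succ (t : ℝ) (n : ℕ) : ominus q t (n + 1) = ominus q t n * (1 - t * q ^ n) := by
  rw [ominus, prod_Icc_succ_top (by omega), Nat.add_sub_cancel]
  rfl

theorem qFall_succ (u : ℤ) (m : ℕ) : qFall q u (m + 1) = qFall q u m * qInt q (u - m) := by
  rw [qFall, qFall, prod_Icc_succ_top (by omega)]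
  congr 2
  push_cast
  ring

theorem qFall_natCast_of_lt {x m : ℕ} (h : x < m) : qFall q x m = 0 := by
  refine prod_eq_zero (i := x + 1) (mem_Icc.mpr ⟨by omega, h⟩) ?_
  simp [qInt]

theorem qFall_mul_qFact (m y : ℕ) : qFall q ((m + y : ℕ) : ℤ) m * qFact q y = qFact q (m + y) := by
  induction m generalizing y with
  | zero => simp [qFall]
  | succ m ih =>
    have hcast : ((m + 1 + y : ℕ) : ℤ) - m = ((y + 1 : ℕ) : ℤ) := by push_cast; ring
    rw [qFall_succ, hcast, mul_assoc, mul_comm (qInt _ _), ← qFact_succ,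
      show m + 1 + y = m + (y + 1) by ring, ih]

@[simp]
theorem qBinom_zero_right (hq0 : 0 < q) (hq1 : q < 1) (n : ℕ) : qBinom q n 0 = 1 := by
  simp [qBinom, (qFact_pos hq0 hq1 n).ne']

@[simp]
theorem qBinom_self (hq0 : 0 < q) (hq1 : q < 1) (n : ℕ) : qBinom q n n = 1 := by
  simp [qBinom, (qFact_pos hq0 hq1 n).ne']

theorem qBinom_succ_succ (hq0 : 0 < q) (hq1 : q < 1) {n k : ℕ} (hk : k < n) :
    qBinom q (n + 1) (k + 1) = qBinom q n (k + 1) + q ^ (n - k) * qBinom q n k := by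
  obtain ⟨j, rfl⟩ : ∃ j, n = k + j + 1 := ⟨n - k - 1, by omega⟩
  have := qFact_pos hq0 hq1 k
  have := qFact_pos hq0 hq1 j
  have := qFact_pos hq0 hq1 (k + j + 1)
  have := qInt_natCast_pos hq0 hq1 (show 1 ≤ j + 1 by omega)
  have := qInt_natCast_pos hq0 hq1 (show 1 ≤ k + 1 by omega)
  rw [qBinom, qBinom, qBinom, show k + j + 1 + 1 - (k + 1) = j + 1 by omega,
    show k + j + 1 - (k + 1) = j by omega, show k + j + 1 - k = j + 1 by omega,
    qFact_succ (k + j + 1), qFact_succ k, qFact_succ j,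
    show k + j + 1 + 1 = (j + 1) + (k + 1) by ring, qInt_natCast_add]
  field_simp

theorem qFall_mul_qBinom (hq0 : 0 < q) (hq1 : q < 1) (m n y : ℕ) :
    qFall q ((m + y : ℕ) : ℤ) m * qBinom q (m + n) (m + y) =
      qFall q ((m + n : ℕ) : ℤ) m * qBinom q n y := by
  have hy' := qFall_mul_qFact (q := q) m y
  have hn' := qFall_mul_qFact (q := q) m n
  have := qFact_pos hq0 hq1 y
  have := qFact_pos hq0 hq1 n
  have := qFact_pos hq0 hq1 (n - y)
  have : qFall q ((m + y : ℕ) : ℤ) m ≠ 0 :=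
    left_ne_zero_of_mul (hy' ▸ (qFact_pos hq0 hq1 (m + y)).ne')
  rw [qBinom, qBinom, Nat.add_sub_add_left, ← hy', ← hn']
  field_simp

theorem sum_qBinom_mul_pow_mul_ominus (hq0 : 0 < q) (hq1 : q < 1) (t : ℝ) (n : ℕ) :
    ∑ x ∈ range (n + 1), qBinom q n x * t ^ x * ominus q t (n - x) = 1 := by
  induction n with
  | zero => simp [hq0, hq1]
  | succ n ih =>
    let u x := qBinom q n x * t ^ x * ominus q t (n + 1 - x)
    let v x := q ^ (n - x) * qBinom q n x * t ^ (x + 1) * ominus q t (n - x)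
    have hsplit : ∀ x ∈ range (n + 1), qBinom q n x * t ^ x * ominus q t (n - x) = u x + v x := by
      intro x hx
      simp only [u, v]
      rw [show n + 1 - x = n - x + 1 by grind, ominus_succ]
      ring
    have hpascal : ∀ x ∈ range n,
        qBinom q (n + 1) (x + 1) * t ^ (x + 1) * ominus q t (n + 1 - (x + 1)) = u (x + 1) + v x := by
      intro x hx
      rw [qBinom_succ_succ hq0 hq1 (mem_range.mp hx), Nat.add_sub_add_right, pow_succ]
      simp only [u, v, Nat.add_sub_add_right]
      ring
    rw [← ih, sum_congr rfl hsplit, sum_add_distrib, sum_range_succ', sum_range_succ,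
      sum_congr rfl hpascal, sum_add_distrib, sum_range_succ' u, sum_range_succ v]
    simp only [Nat.reduceSubDiff, hq0, hq1, qBinom_self, one_mul, tsub_self, ominus_zero, mul_one,
      qBinom_zero_right, pow_zero, tsub_zero, u, v]
    ring

end

theorem stmt11_general (q : ℝ) (hq0 : 0 < q) (hq1 : q < 1) (N : ℕ) (β : ℝ)
    (m : ℕ) (hm : m ≤ N) :
    ∑ x ∈ Finset.range (N + 1),
      qFall q (x : ℤ) m * qBinom q N x * β ^ x * ominus q β (N - x)
      = qFall q (N : ℤ) m * β ^ m := by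
  obtain ⟨n, rfl⟩ : ∃ n, N = m + n := ⟨N - m, by omega⟩
  have hbelow : ∀ x ∈ range m, qFall q (x : ℤ) m * qBinom q (m + n) x * β ^ x *
      ominus q β (m + n - x) = 0 := fun x hx => by
    rw [qFall_natCast_of_lt (mem_range.mp hx), zero_mul, zero_mul, zero_mul]
  have habove : ∀ y ∈ range (n + 1), qFall q ((m + y : ℕ) : ℤ) m * qBinom q (m + n) (m + y) *
      β ^ (m + y) * ominus q β (m + n - (m + y)) =
      qFall q ((m + n : ℕ) : ℤ) m * β ^ m * (qBinom q n y * β ^ y * ominus q β (n - y)) :=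
      fun y _ => by
    rw [qFall_mul_qBinom hq0 hq1, Nat.add_sub_add_left, pow_add]
    ring
  rw [add_assoc, sum_range_add, sum_eq_zero hbelow, zero_add, sum_congr rfl habove, ← mul_sum,
    sum_qBinom_mul_pow_mul_ominus hq0 hq1, mul_one]

theorem stmt11 (q : ℝ) (hq0 : 0 < q) (hq1 : q < 1) (N : ℕ) (β : ℝ)
    (hβ : 0 < β) (hβ' : β < 1) (m : ℕ) (hm : m ≤ N) :
    ∑ x ∈ Finset.range (N + 1),
      qFall q (x : ℤ) m * qBinom q N x * β ^ x * ominus q β (N - x)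
      = qFall q (N : ℤ) m * β ^ m :=
  stmt11_general q hq0 hq1 N β m hm
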